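/- arXiv:1705.10216 — 7 statements merged into one kernel-verified Lean document; each statement's English description precedes it below -/
import Mathlib

section
/- Let I_x and I_y be closed bounded intervals in ℝ, let 0 ≤ μ_h < ∞ and 0 ≤ μ_v < ∞ with μ_v·μ_h < 1. Let h : I_x → I_y satisfy |h(x₁) − h(x₂)| ≤ μ_h·|x₁ − x₂| for all x₁, x₂ ∈ I_x, and let v : I_y → I_x satisfy |v(y₁) − v(y₂)| ≤ μ_v·|y₁ − y₂| for all y₁, y₂ ∈ I_y. Then there exists exactly one point (x, y) ∈ I_x × I_y such that y = h(x) and x = v(y); that is, the μ_h-horizontal curve given by the graph of h and the μ_v-vertical curve given by the graph of v intersect in a unique point. -/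
/-!
The points of the graph of `h` lying on the graph of `v` are exactly the pairs `(x, h x)` with `x`
a fixed point of `v ∘ h`. On `I_x` this composite is Lipschitz with constant `μ_v μ_h < 1`, so the
Banach fixed point theorem on the complete set `I_x` gives exactly one such `x`.
-/

open Set Function NNReal

theorem LipschitzOnWith.existsUnique_isFixedPt {α : Type*} [MetricSpace α] {s : Set α}
    {f : α → α} {K : ℝ≥0} (hs : IsComplete s) (hne : s.Nonempty) (hmaps : MapsTo f s s)
    (hK : K < 1) (hf : LipschitzOnWith K f s) : ∃! x, x ∈ s ∧ IsFixedPt f x := by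
  have hc : ContractingWith K (hmaps.restrict f s s) := ⟨hK, fun x y ↦ hf.to_restrict x y⟩
  obtain ⟨x, hxs, hfx, -⟩ := hc.exists_fixedPoint' hs hmaps hne.some_mem (edist_ne_top _ _)
  refine ⟨x, ⟨hxs, hfx⟩, fun y ⟨hys, hfy⟩ ↦ ?_⟩
  exact congrArg Subtype.val <|
    hc.fixedPoint_unique' (x := ⟨y, hys⟩) (y := ⟨x, hxs⟩) (Subtype.ext hfy) (Subtype.ext hfx)

theorem existsUnique_graph_inter_of_existsUnique_isFixedPt {α β : Type*} {s : Set α} {t : Set β}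
    {h : α → β} {v : β → α} (hst : MapsTo h s t) (hfix : ∃! x, x ∈ s ∧ IsFixedPt (v ∘ h) x) :
    ∃! p : α × β, p.1 ∈ s ∧ p.2 ∈ t ∧ p.2 = h p.1 ∧ p.1 = v p.2 := by
  obtain ⟨x, ⟨hxs, hfx⟩, huniq⟩ := hfix
  refine ⟨(x, h x), ⟨hxs, hst hxs, rfl, hfx.symm⟩, ?_⟩
  rintro ⟨y, z⟩ ⟨hys, -, hz : z = h y, hyz : y = v z⟩
  obtain rfl : y = x := huniq y ⟨hys, by rw [hz] at hyz; exact hyz.symm⟩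
  rw [hz]

theorem existsUnique_graph_inter_of_lipschitzOnWith {α β : Type*} [MetricSpace α]
    [PseudoMetricSpace β] {s : Set α} {t : Set β} {h : α → β} {v : β → α} {Kh Kv : ℝ≥0}
    (hs : IsComplete s) (hne : s.Nonempty) (hst : MapsTo h s t) (hts : MapsTo v t s)
    (hh : LipschitzOnWith Kh h s) (hv : LipschitzOnWith Kv v t) (hK : Kv * Kh < 1) :
    ∃! p : α × β, p.1 ∈ s ∧ p.2 ∈ t ∧ p.2 = h p.1 ∧ p.1 = v p.2 :=
  existsUnique_graph_inter_of_existsUnique_isFixedPt hst <|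
    (hv.comp hh hst).existsUnique_isFixedPt hs hne (hts.comp hst) hK

theorem horizontal_vertical_curve_unique_intersection_general
    (a b c d : ℝ) (hab : a ≤ b)
    (μh μv : ℝ) (hμv : 0 ≤ μv) (hμ : μv * μh < 1)
    (h v : ℝ → ℝ)
    (hmaps : ∀ x ∈ Set.Icc a b, h x ∈ Set.Icc c d)
    (vmaps : ∀ y ∈ Set.Icc c d, v y ∈ Set.Icc a b)
    (hlip : ∀ x₁ ∈ Set.Icc a b, ∀ x₂ ∈ Set.Icc a b, |h x₁ - h x₂| ≤ μh * |x₁ - x₂|)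
    (vlip : ∀ y₁ ∈ Set.Icc c d, ∀ y₂ ∈ Set.Icc c d, |v y₁ - v y₂| ≤ μv * |y₁ - y₂|) :
    ∃! p : ℝ × ℝ, p.1 ∈ Set.Icc a b ∧ p.2 ∈ Set.Icc c d ∧ p.2 = h p.1 ∧ p.1 = v p.2 := by
  have hh : LipschitzOnWith (Real.toNNReal μh) h (Icc a b) :=
    .of_dist_le' fun x hx y hy ↦ by simpa only [Real.dist_eq] using hlip x hx y hy
  have hv : LipschitzOnWith (Real.toNNReal μv) v (Icc c d) :=
    .of_dist_le' fun x hx y hy ↦ by simpa only [Real.dist_eq] using vlip x hx y hy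
  have hK : Real.toNNReal μv * Real.toNNReal μh < 1 := by
    rw [← Real.toNNReal_mul hμv]
    exact Real.toNNReal_lt_one.2 hμ
  exact existsUnique_graph_inter_of_lipschitzOnWith isClosed_Icc.isComplete (nonempty_Icc.2 hab)
    hmaps vmaps hh hv hK

/-- A `μₕ`-horizontal curve (graph of `h` over `I_x = [a,b]`, lying in `I_x × I_y`)
and a `μᵥ`-vertical curve (graph of `v` over `I_y = [c,d]`, lying in `I_x × I_y`)
with `μᵥ * μₕ < 1` intersect in exactly one point. -/
theorem horizontal_vertical_curve_unique_intersection
    (a b c d : ℝ) (hab : a ≤ b) (hcd : c ≤ d)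
    (μh μv : ℝ) (hμh : 0 ≤ μh) (hμv : 0 ≤ μv) (hμ : μv * μh < 1)
    (h v : ℝ → ℝ)
    (hmaps : ∀ x ∈ Set.Icc a b, h x ∈ Set.Icc c d)
    (vmaps : ∀ y ∈ Set.Icc c d, v y ∈ Set.Icc a b)
    (hlip : ∀ x₁ ∈ Set.Icc a b, ∀ x₂ ∈ Set.Icc a b, |h x₁ - h x₂| ≤ μh * |x₁ - x₂|)
    (vlip : ∀ y₁ ∈ Set.Icc c d, ∀ y₂ ∈ Set.Icc c d, |v y₁ - v y₂| ≤ μv * |y₁ - y₂|) :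
    ∃! p : ℝ × ℝ, p.1 ∈ Set.Icc a b ∧ p.2 ∈ Set.Icc c d ∧ p.2 = h p.1 ∧ p.1 = v p.2 :=
  horizontal_vertical_curve_unique_intersection_general a b c d hab μh μv hμv hμ h v hmaps vmaps
    hlip vlip
end

section
/- Let I_x be a closed bounded interval in ℝ and 0 ≤ μ_h < ∞. For each k ≥ 1 let h₁ᵏ, h₂ᵏ : I_x → ℝ be functions, each satisfying the Lipschitz condition with constant μ_h, with h₁ᵏ(x) ≤ h₂ᵏ(x) for all x ∈ I_x, and set H_k = {(x, y) ∈ ℝ² : h₁ᵏ(x) ≤ y ≤ h₂ᵏ(x), x ∈ I_x}. Assume the strips are nested, H₁ ⊇ H₂ ⊇ ⋯ ⊇ H_k ⊇ ⋯, and that the widths d(H_k) = max_{x ∈ I_x} |h₂ᵏ(x) − h₁ᵏ(x)| tend to 0 as k → ∞. Then the intersection ⋂_{k=1}^{∞} H_k is a μ_h-horizontal curve; that is, there exists a function h_∞ : I_x → ℝ with |h_∞(x₁) − h_∞(x₂)| ≤ μ_h·|x₁ − x₂| for all x₁, x₂ ∈ I_x such that ⋂_{k=1}^{∞} H_k = {(x,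 h_∞(x)) : x ∈ I_x}. -/
/-!
Over each `x ∈ [a, b]` the vertical slices `[h₁ k x, h₂ k x]` of the strips are nested closed
intervals whose lengths are bounded by the widths, so they shrink to the single point
`⨆ k, h₁ k x`. The widths are genuine suprema because Lipschitz functions are continuous, hence
bounded, on the compact interval. The limit curve is a pointwise limit of `μₕ`-Lipschitz
functions, hence `μₕ`-Lipschitz.
-/

open Set Filter Topology

section NestedIntervals

variable {ι : Type*} {l : Filter ι}

theorem tendsto_of_forall_mem_Icc_of_tendsto_sub {f g : ι → ℝ} {c : ℝ}
    (hc : ∀ n, c ∈ Icc (f n) (g n)) (hlen : Tendsto (fun n => g n - f n) l (𝓝 0)) :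
    Tendsto f l (𝓝 c) := by
  have hlower : Tendsto (fun n => c - (g n - f n)) l (𝓝 c) := by
    simpa using tendsto_const_nhds.sub hlen
  exact tendsto_of_tendsto_of_tendsto_of_le_of_le hlower tendsto_const_nhds
    (fun n => by linarith [(hc n).2]) (fun n => (hc n).1)

theorem iInter_Icc_eq_singleton_ciSup [Preorder ι] [IsDirectedOrder ι] [Nonempty ι]
    {f g : ι → ℝ} (hanti : Antitone fun n => Icc (f n) (g n)) (hfg : ∀ n, f n ≤ g n)
    (hlen : Tendsto (fun n => g n - f n) atTop (𝓝 0)) :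
    ⋂ n, Icc (f n) (g n) = {⨆ n, f n} := by
  have hsup := mem_iInter.1 (ciSup_mem_iInter_Icc_of_antitone_Icc hanti hfg)
  refine eq_singleton_iff_unique_mem.2 ⟨mem_iInter.2 hsup, fun y hy => ?_⟩
  exact tendsto_nhds_unique (tendsto_of_forall_mem_Icc_of_tendsto_sub (mem_iInter.1 hy) hlen)
    (tendsto_of_forall_mem_Icc_of_tendsto_sub hsup hlen)

end NestedIntervals

theorem le_biSup_of_bddAbove {α β : Type*} [ConditionallyCompleteLattice β] {f : α → β}
    {s : Set α} (hf : BddAbove (f '' s)) {x : α} (hx : x ∈ s) : f x ≤ ⨆ y ∈ s, f y :=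
  le_ciSup₂ (f := fun y (_ : y ∈ s) => f y)
    (hf.mono <| iUnion_subset fun _ => range_subset_iff.2 (mem_image_of_mem f)) x hx

theorem tendsto_apply_of_tendsto_biSup_abs {ι α : Type*} {l : Filter ι} {F : ι → α → ℝ}
    {s : Set α} (hbdd : ∀ n, BddAbove ((fun x => |F n x|) '' s))
    (hsup : Tendsto (fun n => ⨆ x ∈ s, |F n x|) l (𝓝 0)) {x : α} (hx : x ∈ s) :
    Tendsto (fun n => F n x) l (𝓝 0) :=
  (tendsto_zero_iff_abs_tendsto_zero _).2 <|
    squeeze_zero (fun _ => abs_nonneg _) (fun n => le_biSup_of_bddAbove (hbdd n) hx) hsup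

theorem abs_sub_le_mul_of_tendsto {ι α : Type*} [PseudoMetricSpace α] {l : Filter ι} [l.NeBot]
    {F : ι → α → ℝ} {f : α → ℝ} {s : Set α} {K : ℝ}
    (hF : ∀ n, ∀ x ∈ s, ∀ y ∈ s, |F n x - F n y| ≤ K * dist x y)
    (hlim : ∀ x ∈ s, Tendsto (fun n => F n x) l (𝓝 (f x))) :
    ∀ x ∈ s, ∀ y ∈ s, |f x - f y| ≤ K * dist x y := fun x hx y hy =>
  le_of_tendsto ((hlim x hx).sub (hlim y hy)).abs (Eventually.of_forall fun n => hF n x hx y hy)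

def horizontalStrip (s : Set ℝ) (f g : ℝ → ℝ) : Set (ℝ × ℝ) :=
  {p | p.1 ∈ s ∧ p.2 ∈ Icc (f p.1) (g p.1)}

theorem Icc_subset_Icc_of_horizontalStrip_subset {s : Set ℝ} {f g f' g' : ℝ → ℝ}
    (h : horizontalStrip s f g ⊆ horizontalStrip s f' g') {x : ℝ} (hx : x ∈ s) :
    Icc (f x) (g x) ⊆ Icc (f' x) (g' x) := fun y hy =>
  (h (show (x, y) ∈ horizontalStrip s f g from ⟨hx, hy⟩)).2

theorem iInter_horizontalStrip {ι : Type*} [Nonempty ι] (s : Set ℝ) (f g : ι → ℝ → ℝ) :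
    ⋂ i, horizontalStrip s (f i) (g i) = {p | p.1 ∈ s ∧ p.2 ∈ ⋂ i, Icc (f i p.1) (g i p.1)} := by
  ext p
  simp only [horizontalStrip, mem_iInter, mem_ofPred_eq, forall_and, forall_const]

theorem nested_horizontal_strips_intersect_in_horizontal_curve_general
    (a b : ℝ) (μh : ℝ)
    (h₁ h₂ : ℕ → ℝ → ℝ)
    (hlip₁ : ∀ k, ∀ x₁ ∈ Set.Icc a b, ∀ x₂ ∈ Set.Icc a b,
      |h₁ k x₁ - h₁ k x₂| ≤ μh * |x₁ - x₂|)
    (hlip₂ : ∀ k, ∀ x₁ ∈ Set.Icc a b, ∀ x₂ ∈ Set.Icc a b,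
      |h₂ k x₁ - h₂ k x₂| ≤ μh * |x₁ - x₂|)
    (hle : ∀ k, ∀ x ∈ Set.Icc a b, h₁ k x ≤ h₂ k x)
    (H : ℕ → Set (ℝ × ℝ))
    (hH : ∀ k, H k = {p : ℝ × ℝ | p.1 ∈ Set.Icc a b ∧ p.2 ∈ Set.Icc (h₁ k p.1) (h₂ k p.1)})
    (hnested : ∀ k, H (k + 1) ⊆ H k)
    (hwidth : Filter.Tendsto (fun k => ⨆ x ∈ Set.Icc a b, |h₂ k x - h₁ k x|)
      Filter.atTop (nhds 0)) :
    ∃ hInf : ℝ → ℝ,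
      (∀ x₁ ∈ Set.Icc a b, ∀ x₂ ∈ Set.Icc a b, |hInf x₁ - hInf x₂| ≤ μh * |x₁ - x₂|) ∧
      (⋂ k, H k) = {p : ℝ × ℝ | p.1 ∈ Set.Icc a b ∧ p.2 = hInf p.1} := by
  obtain rfl : H = fun k => horizontalStrip (Icc a b) (h₁ k) (h₂ k) := funext hH
  have hslices (x) (hx : x ∈ Icc a b) : Antitone fun k => Icc (h₁ k x) (h₂ k x) :=
    antitone_nat_of_succ_le fun k => Icc_subset_Icc_of_horizontalStrip_subset (hnested k) hx
  -- without this, `⨆` over an unbounded family of reals would be the junk value `0`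
  have hbdd (k) : BddAbove ((fun x => |h₂ k x - h₁ k x|) '' Icc a b) :=
    isCompact_Icc.bddAbove_image ((LipschitzOnWith.of_dist_le' (hlip₂ k)).continuousOn.sub
      (LipschitzOnWith.of_dist_le' (hlip₁ k)).continuousOn).abs
  have hlen (x) (hx : x ∈ Icc a b) : Tendsto (fun k => h₂ k x - h₁ k x) atTop (𝓝 0) :=
    tendsto_apply_of_tendsto_biSup_abs hbdd hwidth hx
  have hslice_inter (x) (hx : x ∈ Icc a b) :
      ⋂ k, Icc (h₁ k x) (h₂ k x) = {⨆ k, h₁ k x} :=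
    iInter_Icc_eq_singleton_ciSup (hslices x hx) (hle · x hx) (hlen x hx)
  refine ⟨fun x => ⨆ k, h₁ k x, abs_sub_le_mul_of_tendsto (l := atTop) hlip₁ fun x hx => ?_, ?_⟩
  · refine tendsto_of_forall_mem_Icc_of_tendsto_sub (fun k => ?_) (hlen x hx)
    exact mem_iInter.1 ((hslice_inter x hx).symm ▸ mem_singleton _) k
  · rw [iInter_horizontalStrip]
    exact ext fun p => and_congr_right fun hx => by rw [hslice_inter _ hx, mem_singleton_iff]

/-- A nested sequence of `μₕ`-horizontal strips whose widths tend to zero intersects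
in a `μₕ`-horizontal curve. -/
theorem nested_horizontal_strips_intersect_in_horizontal_curve
    (a b : ℝ) (hab : a ≤ b) (μh : ℝ) (hμh : 0 ≤ μh)
    (h₁ h₂ : ℕ → ℝ → ℝ)
    (hlip₁ : ∀ k, ∀ x₁ ∈ Set.Icc a b, ∀ x₂ ∈ Set.Icc a b,
      |h₁ k x₁ - h₁ k x₂| ≤ μh * |x₁ - x₂|)
    (hlip₂ : ∀ k, ∀ x₁ ∈ Set.Icc a b, ∀ x₂ ∈ Set.Icc a b,
      |h₂ k x₁ - h₂ k x₂| ≤ μh * |x₁ - x₂|)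
    (hle : ∀ k, ∀ x ∈ Set.Icc a b, h₁ k x ≤ h₂ k x)
    (H : ℕ → Set (ℝ × ℝ))
    (hH : ∀ k, H k = {p : ℝ × ℝ | p.1 ∈ Set.Icc a b ∧ p.2 ∈ Set.Icc (h₁ k p.1) (h₂ k p.1)})
    (hnested : ∀ k, H (k + 1) ⊆ H k)
    (hwidth : Filter.Tendsto (fun k => ⨆ x ∈ Set.Icc a b, |h₂ k x - h₁ k x|)
      Filter.atTop (nhds 0)) :
    ∃ hInf : ℝ → ℝ,
      (∀ x₁ ∈ Set.Icc a b, ∀ x₂ ∈ Set.Icc a b, |hInf x₁ - hInf x₂| ≤ μh * |x₁ - x₂|) ∧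
      (⋂ k, H k) = {p : ℝ × ℝ | p.1 ∈ Set.Icc a b ∧ p.2 = hInf p.1} :=
  nested_horizontal_strips_intersect_in_horizontal_curve_general a b μh h₁ h₂ hlip₁ hlip₂ hle H hH
    hnested hwidth
end

section
/- Let μ_v ≥ 0 and let t ↦ (x(t), y(t)) be a continuously differentiable curve defined on a closed interval [a, b] ⊂ ℝ such that for every t ∈ [a, b] the tangent vector (x′(t), y′(t)) is nonzero and satisfies |x′(t)| ≤ μ_v·|y′(t)|. Then y′(t) does not change sign on [a, b], and for every pair of points t₁, t₂ ∈ [a, b] one has |x(t₁) − x(t₂)| ≤ μ_v·|y(t₁) − y(t₂)|. -/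
/-! The vertical component `y'` of the tangent cannot vanish inside the sector without the whole
tangent vanishing, so by the intermediate value theorem it has constant sign. Along the curve,
`μ y - x` and `μ y + x` (with `y` replaced by `-y` if `y'` is negative) have nonnegative
derivatives, so they are monotone, which is the Lipschitz estimate. -/

lemma snd_ne_zero_of_abs_fst_le {ξ η μ : ℝ} (hne : (ξ, η) ≠ (0, 0)) (hsector : |ξ| ≤ μ * |η|) :
    η ≠ 0 := by
  rintro rfl
  rw [abs_zero, mul_zero, abs_nonpos_iff] at hsector
  exact hne (by rw [hsector])

lemma IsPreconnected.pos_or_neg_of_ne_zero {X α : Type*} [TopologicalSpace X]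
    [ConditionallyCompleteLinearOrder α] [TopologicalSpace α] [OrderTopology α] [Zero α]
    {s : Set X} (hs : IsPreconnected s) {f : X → α} (hf : ContinuousOn f s)
    (hne : ∀ t ∈ s, f t ≠ 0) : (∀ t ∈ s, 0 < f t) ∨ (∀ t ∈ s, f t < 0) := by
  by_contra! h
  obtain ⟨⟨a, ha, hfa⟩, ⟨b, hb, hfb⟩⟩ := h
  obtain ⟨c, hc, hfc⟩ := hs.intermediate_value ha hb hf ⟨hfa, hfb⟩
  exact hne c hc hfc

lemma abs_sub_le_mul_abs_sub_of_abs_deriv_le {s : Set ℝ} (hs : Convex ℝ s) {μ : ℝ} (hμ : 0 ≤ μ)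
    {f g f' g' : ℝ → ℝ} (hf : ∀ t ∈ s, HasDerivWithinAt f (f' t) s t)
    (hg : ∀ t ∈ s, HasDerivWithinAt g (g' t) s t) (hbound : ∀ t ∈ s, |f' t| ≤ μ * g' t) :
    ∀ t₁ ∈ s, ∀ t₂ ∈ s, |f t₁ - f t₂| ≤ μ * |g t₁ - g t₂| := by
  have monotoneOn_of_deriv_nonneg_on {h h' : ℝ → ℝ} (hh : ∀ t ∈ s, HasDerivWithinAt h (h' t) s t)
      (hh' : ∀ t ∈ s, 0 ≤ h' t) : MonotoneOn h s :=
    monotoneOn_of_hasDerivWithinAt_nonneg hs (fun t ht => (hh t ht).continuousWithinAt)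
      (fun t ht => (hh t (interior_subset ht)).mono interior_subset)
      (fun t ht => hh' t (interior_subset ht))
  have hsub : MonotoneOn (fun t => μ * g t - f t) s :=
    monotoneOn_of_deriv_nonneg_on (fun t ht => ((hg t ht).const_mul μ).sub (hf t ht))
      (fun t ht => sub_nonneg.2 (le_abs_self _ |>.trans (hbound t ht)))
  have hadd : MonotoneOn (fun t => μ * g t + f t) s :=
    monotoneOn_of_deriv_nonneg_on (fun t ht => ((hg t ht).const_mul μ).add (hf t ht))
      (fun t ht => by have := neg_abs_le (f' t); linarith [hbound t ht])
  intro t₁ ht₁ t₂ ht₂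
  wlog h12 : t₁ ≤ t₂ generalizing t₁ t₂
  · rw [abs_sub_comm, abs_sub_comm (g t₁)]
    exact this t₂ ht₂ t₁ ht₁ (le_of_not_ge h12)
  have h₁ := hsub ht₁ ht₂ h12
  have h₂ := hadd ht₁ ht₂ h12
  calc |f t₁ - f t₂| ≤ μ * (g t₂ - g t₁) := abs_sub_le_iff.2 ⟨by linarith, by linarith⟩
    _ ≤ μ * |g t₁ - g t₂| := by
      rw [abs_sub_comm]
      exact mul_le_mul_of_nonneg_left (le_abs_self _) hμ

lemma abs_sub_le_mul_abs_sub_of_abs_deriv_le_mul_abs {s : Set ℝ} (hs : Convex ℝ s) {μ : ℝ}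
    (hμ : 0 ≤ μ) {f g f' g' : ℝ → ℝ} (hf : ∀ t ∈ s, HasDerivWithinAt f (f' t) s t)
    (hg : ∀ t ∈ s, HasDerivWithinAt g (g' t) s t) (hbound : ∀ t ∈ s, |f' t| ≤ μ * |g' t|)
    (hsign : (∀ t ∈ s, 0 ≤ g' t) ∨ (∀ t ∈ s, g' t ≤ 0)) :
    ∀ t₁ ∈ s, ∀ t₂ ∈ s, |f t₁ - f t₂| ≤ μ * |g t₁ - g t₂| := by
  rcases hsign with hpos | hneg
  · refine abs_sub_le_mul_abs_sub_of_abs_deriv_le hs hμ hf hg fun t ht => ?_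
    rw [← abs_of_nonneg (hpos t ht)]
    exact hbound t ht
  · intro t₁ ht₁ t₂ ht₂
    have := abs_sub_le_mul_abs_sub_of_abs_deriv_le hs hμ hf (fun t ht => (hg t ht).neg)
      (fun t ht => by rw [← abs_of_nonpos (hneg t ht)]; exact hbound t ht) t₁ ht₁ t₂ ht₂
    simpa only [Pi.neg_apply, neg_sub_neg, abs_sub_comm (g t₂)] using this

theorem sector_curve_is_vertical_curve_general
    (μv : ℝ) (hμv : 0 ≤ μv) (a b : ℝ)
    (x y x' y' : ℝ → ℝ)
    (hx : ∀ t ∈ Set.Icc a b, HasDerivWithinAt x (x' t) (Set.Icc a b) t)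
    (hy : ∀ t ∈ Set.Icc a b, HasDerivWithinAt y (y' t) (Set.Icc a b) t)
    (hy' : ContinuousOn y' (Set.Icc a b))
    (hne : ∀ t ∈ Set.Icc a b, (x' t, y' t) ≠ (0, 0))
    (hsector : ∀ t ∈ Set.Icc a b, |x' t| ≤ μv * |y' t|) :
    ((∀ t ∈ Set.Icc a b, 0 < y' t) ∨ (∀ t ∈ Set.Icc a b, y' t < 0)) ∧
      (∀ t₁ ∈ Set.Icc a b, ∀ t₂ ∈ Set.Icc a b,
        |x t₁ - x t₂| ≤ μv * |y t₁ - y t₂|) := by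
  have hsign := isPreconnected_Icc.pos_or_neg_of_ne_zero hy' fun t ht =>
    snd_ne_zero_of_abs_fst_le (hne t ht) (hsector t ht)
  refine ⟨hsign, abs_sub_le_mul_abs_sub_of_abs_deriv_le_mul_abs (convex_Icc a b) hμv hx hy
    hsector ?_⟩
  exact hsign.imp (fun h t ht => (h t ht).le) (fun h t ht => (h t ht).le)

/-- A C¹ curve on `[a,b]` with nonvanishing tangent vectors lying in the stable sector
`|ξ| ≤ μᵥ|η|` has `y'` of constant sign, and satisfies the Lipschitz estimate
`|x(t₁) − x(t₂)| ≤ μᵥ |y(t₁) − y(t₂)|`. -/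
theorem sector_curve_is_vertical_curve
    (μv : ℝ) (hμv : 0 ≤ μv) (a b : ℝ) (hab : a ≤ b)
    (x y x' y' : ℝ → ℝ)
    (hx : ∀ t ∈ Set.Icc a b, HasDerivWithinAt x (x' t) (Set.Icc a b) t)
    (hy : ∀ t ∈ Set.Icc a b, HasDerivWithinAt y (y' t) (Set.Icc a b) t)
    (hx' : ContinuousOn x' (Set.Icc a b))
    (hy' : ContinuousOn y' (Set.Icc a b))
    (hne : ∀ t ∈ Set.Icc a b, (x' t, y' t) ≠ (0, 0))
    (hsector : ∀ t ∈ Set.Icc a b, |x' t| ≤ μv * |y' t|) :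
    ((∀ t ∈ Set.Icc a b, 0 < y' t) ∨ (∀ t ∈ Set.Icc a b, y' t < 0)) ∧
      (∀ t₁ ∈ Set.Icc a b, ∀ t₂ ∈ Set.Icc a b,
        |x t₁ - x t₂| ≤ μv * |y t₁ - y t₂|) :=
  sector_curve_is_vertical_curve_general μv hμv a b x y x' y' hx hy hy' hne hsector
end

section
/- Let μ_v > 0 and let y₀, ξ, η be real numbers such that |y₀| ≥ (1/2)·(μ_v + 1/μ_v) and |ξ| ≤ μ_v·|η|. Then |η| ≤ μ_v·|ξ + 2·y₀·η|. -/
/-- The Jacobian of the inverse Hénon map sends the stable sector into the stable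
sector when `|y₀| ≥ (μᵥ + 1/μᵥ)/2`. -/
theorem stable_sector_invariance
    (μv : ℝ) (hμv : 0 < μv) (y₀ ξ η : ℝ)
    (hy₀ : (1 / 2) * (μv + 1 / μv) ≤ |y₀|)
    (hsector : |ξ| ≤ μv * |η|) :
    |η| ≤ μv * |ξ + 2 * y₀ * η| := by
  have hdominant : (μv + 1 / μv) * |η| ≤ |2 * y₀ * η| := by
    rw [abs_mul, abs_mul, abs_two]
    gcongr
    linarith
  have hreverse : |2 * y₀ * η| - |ξ| ≤ |ξ + 2 * y₀ * η| := by
    simpa only [add_comm ξ] using abs_sub_abs_le_abs_add (2 * y₀ * η) ξ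
  calc |η| = μv * ((μv + 1 / μv) * |η| - μv * |η|) := by field_simp; ring
    _ ≤ μv * (|2 * y₀ * η| - |ξ|) := by gcongr
    _ ≤ μv * |ξ + 2 * y₀ * η| := by gcongr
end

section
/- Let μ_h > 0 and let x₀, ξ, η be real numbers such that |x₀| ≥ (1/2)·(μ_h + 1/μ_h) and |η| ≤ μ_h·|ξ|. Then |ξ| ≤ μ_h·|2·x₀·ξ + η|. -/
theorem inv_mul_abs_le_abs_two_mul_add {K : Type*} [Field K] [LinearOrder K]
    [IsStrictOrderedRing K] {μ x₀ ξ η : K} (hx₀ : (1 / 2) * (μ + 1 / μ) ≤ |x₀|)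
    (hsector : |η| ≤ μ * |ξ|) :
    μ⁻¹ * |ξ| ≤ |2 * x₀ * ξ + η| :=
  calc μ⁻¹ * |ξ| = (μ + 1 / μ) * |ξ| - μ * |ξ| := by ring
    _ ≤ |2 * x₀ * ξ| - |η| := by
      rw [abs_mul, abs_mul, abs_two]
      gcongr
      linarith
    _ ≤ |2 * x₀ * ξ + η| := abs_sub_abs_le_abs_add _ _

/-- The Jacobian of the Hénon map sends the unstable sector into the unstable
sector when `|x₀| ≥ (μₕ + 1/μₕ)/2`. -/
theorem unstable_sector_invariance
    (μh : ℝ) (hμh : 0 < μh) (x₀ ξ η : ℝ)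
    (hx₀ : (1 / 2) * (μh + 1 / μh) ≤ |x₀|)
    (hsector : |η| ≤ μh * |ξ|) :
    |ξ| ≤ μh * |2 * x₀ * ξ + η| :=
  (inv_mul_le_iff₀ hμh).1 (inv_mul_abs_le_abs_two_mul_add hx₀ hsector)
end

section
/- For every integer n, one has √(10.5 + 0.1·cos(n+1) + √10.6 + 1.1205) < 8.5 + 0.1·cos(n) − √10.6 − 1.2555, and moreover 8.5 + 0.1·cos(n) − √10.6 − 1.2555 < 1 + √10.6. -/
/-! Only `3.25 < √10.6 < 3.26` and `|cos| ≤ 1` are needed: then `x₂ > 3.88`, so `x₂² > 15`,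
while the radicand of `x̄₂` stays below `15`; and `x₂ < R` reduces to `6.3445 < 2√10.6`. -/

lemma sqrt_ten_point_six_mem_Ioo : Real.sqrt 10.6 ∈ Set.Ioo 3.25 3.26 :=
  ⟨Real.lt_sqrt_of_sq_lt (by norm_num), (Real.sqrt_lt' (by norm_num)).2 (by norm_num)⟩

/-- The chain of inequalities `x̄₂ < x₂ < R` in the verification of the
nonautonomous Conley–Moser condition A3 for the Hénon map with
`A(n) = 9.5 + 0.1 cos n` and `R = 1 + √10.6`. -/
theorem henon_x_inequalities (n : ℤ) :
    Real.sqrt (10.5 + 0.1 * Real.cos ((n : ℝ) + 1) + Real.sqrt 10.6 + 1.1205)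
        < 8.5 + 0.1 * Real.cos n - Real.sqrt 10.6 - 1.2555 ∧
      8.5 + 0.1 * Real.cos n - Real.sqrt 10.6 - 1.2555 < 1 + Real.sqrt 10.6 := by
  obtain ⟨hs_lo, hs_hi⟩ := sqrt_ten_point_six_mem_Ioo
  obtain ⟨hc_lo, hc_hi⟩ := abs_le.1 (Real.abs_cos_le_one n)
  have hc' := Real.cos_le_one ((n : ℝ) + 1)
  have hx₂ : 3.88 < 8.5 + 0.1 * Real.cos n - Real.sqrt 10.6 - 1.2555 := by linarith
  refine ⟨(Real.sqrt_lt' (by linarith)).2 ?_, by linarith⟩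
  nlinarith
end

section
/- For every real number A* with A* ≥ 9.5 and every integer n, one has √(A* + 0.1·cos(n+1) + 1 + √(1 + A* + 0.1·cos(n)) + 1.1205) < A* + 0.1·cos(n) − 1 − √(1 + A* + 0.1·cos(n)) − 1.1205. -/
/-!
With `s = √(1 + A(n))` we have `A(n) = s² - 1` and `A(n+1) ≤ A(n) + 0.2 = s² - 0.8`, so the claim
follows from `√(s² + s + 1.3205) < s² - s - 3.1205`, a polynomial inequality valid for
`s ≥ 3.22`; and `A* ≥ 9.5` gives `s ≥ √10.4 > 3.22`.
-/

lemma sq_add_add_lt_sq_sub_sub_sq {s : ℝ} (hs : 3.22 ≤ s) :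
    s ^ 2 + s + 1.3205 < (s ^ 2 - s - 3.1205) ^ 2 := by
  nlinarith [mul_nonneg (sub_nonneg.2 hs) (sub_nonneg.2 hs),
    mul_nonneg (mul_nonneg (sub_nonneg.2 hs) (sub_nonneg.2 hs)) (sub_nonneg.2 hs)]

lemma sqrt_lt_sq_sub_sub {s t : ℝ} (hs : 3.22 ≤ s) (ht : t ≤ s ^ 2 + s + 1.3205) :
    √t < s ^ 2 - s - 3.1205 := by
  have hpos : 0 < s ^ 2 - s - 3.1205 := by nlinarith
  rw [Real.sqrt_lt' hpos]
  linarith [sq_add_add_lt_sq_sub_sub_sq hs]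

lemma le_sqrt_one_add {a : ℝ} (ha : 9.4 ≤ a) : 3.22 ≤ √(1 + a) :=
  Real.le_sqrt_of_sq_le (by linarith)

/-- The inequality `x̄₂ < x₂` for the family of nonautonomous Hénon maps with
`A(n) = A* + 0.1 cos n`, valid for every `A* ≥ 9.5`. -/
theorem henon_x_inequality_family (A : ℝ) (hA : 9.5 ≤ A) (n : ℤ) :
    Real.sqrt (A + 0.1 * Real.cos ((n : ℝ) + 1) + 1
        + Real.sqrt (1 + A + 0.1 * Real.cos n) + 1.1205)
      < A + 0.1 * Real.cos n - 1 - Real.sqrt (1 + A + 0.1 * Real.cos n) - 1.1205 := by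
  have hcos_n := Real.neg_one_le_cos n
  have hcos_succ := Real.cos_le_one ((n : ℝ) + 1)
  have hs : 3.22 ≤ √(1 + A + 0.1 * Real.cos n) := by
    rw [add_assoc]
    exact le_sqrt_one_add (by linarith)
  have hsq : √(1 + A + 0.1 * Real.cos n) ^ 2 = 1 + A + 0.1 * Real.cos n :=
    Real.sq_sqrt (by linarith)
  have key := sqrt_lt_sq_sub_sub hs
    (t := A + 0.1 * Real.cos ((n : ℝ) + 1) + 1 + √(1 + A + 0.1 * Real.cos n) + 1.1205)
    (by linarith)
  linarith
end
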